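/- Let (X, f_{1,∞}) be a nonautonomous discrete dynamical system. If the sequence (f_n)_{n∈ℕ} converges uniformly to a function φ : X → X and the family {φ ∘ f_1^n : n ∈ ℕ} is equicontinuous, then the function f_1^p : X → X is continuous for every free ultrafilter p on ℕ. -/
import Mathlib


open Filter Topology

/-- The `n`-th iterate `f_1^n = f_n ∘ ⋯ ∘ f_1` (maps indexed from `1`; `f 0` unused). -/
def iterSeq {X : Type*} (f : ℕ → X → X) : ℕ → X → X
  | 0 => id
  | n + 1 => f (n + 1) ∘ iterSeq f n

/-- The `p`-limit of a sequence `u` with respect to an ultrafilter `p` on `ℕ`. -/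
noncomputable def pLim {X : Type*} [TopologicalSpace X] (p : Ultrafilter ℕ) (u : ℕ → X) : X :=
  letI : Nonempty X := ⟨u 0⟩
  limUnder (p : Filter ℕ) u

/-- `f_1^p(x) = p-lim_n f_1^n(x)`. -/
noncomputable def pIter {X : Type*} [TopologicalSpace X] (f : ℕ → X → X)
    (p : Ultrafilter ℕ) : X → X :=
  fun x => pLim p fun n => iterSeq f n x

lemma tendsto_pLim {X : Type*} [TopologicalSpace X] [CompactSpace X] [T2Space X]
    (p : Ultrafilter ℕ) (u : ℕ → X) :
    Tendsto u (p : Filter ℕ) (𝓝 (pLim p u)) := by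
  letI : Nonempty X := ⟨u 0⟩
  obtain ⟨x, _, hx⟩ := isCompact_univ.ultrafilter_le_nhds (p.map u)
    (by simp [Filter.le_principal_iff])
  exact tendsto_nhds_limUnder ⟨x, hx⟩

/-- If `(f_n)` converges uniformly to `φ : X → X` and the family `{φ ∘ f_1^n : n ∈ ℕ}` is
equicontinuous, then `f_1^p : X → X` is continuous for every free ultrafilter `p` on `ℕ`. -/
theorem stmt13 {X : Type*} [MetricSpace X] [CompactSpace X]
    (f : ℕ → X → X) (hf : ∀ n, 1 ≤ n → Continuous (f n))
    (φ : X → X) (hconv : TendstoUniformly (fun n x => f n x) φ Filter.atTop)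
    (hequi : Equicontinuous fun n : ℕ => φ ∘ iterSeq f n)
    (p : Ultrafilter ℕ) (hp : (p : Filter ℕ) ≤ Filter.cofinite) :
    Continuous (pIter f p) := by
  rw [Metric.continuous_iff]
  intro x ε hε
  -- uniform convergence
  have hc := (Metric.tendstoUniformly_iff.mp hconv (ε/4) (by linarith))
  obtain ⟨N, hN⟩ := hc.exists_forall_of_atTop
  -- equicontinuity at x
  have he := Metric.equicontinuousAt_iff.mp (hequi x) (ε/4) (by linarith)
  obtain ⟨δ, hδ, hδ'⟩ := he
  refine ⟨δ, hδ, fun y hy => ?_⟩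
  have key : ∀ n, N ≤ n → dist (iterSeq f (n+1) y) (iterSeq f (n+1) x) < 3*ε/4 := by
    intro n hn
    have h1 := hN (n+1) (by omega) (iterSeq f n y)
    have h2 := hN (n+1) (by omega) (iterSeq f n x)
    have h3 := hδ' y hy n
    simp only [Function.comp_apply] at h3
    calc dist (iterSeq f (n+1) y) (iterSeq f (n+1) x)
        ≤ dist (iterSeq f (n+1) y) (φ (iterSeq f n y))
          + dist (φ (iterSeq f n y)) (φ (iterSeq f n x))
          + dist (φ (iterSeq f n x)) (iterSeq f (n+1) x) := dist_triangle4 _ _ _ _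
      _ < ε/4 + ε/4 + ε/4 := by
          have e1 : dist (iterSeq f (n+1) y) (φ (iterSeq f n y)) < ε/4 := by
            rw [dist_comm]; exact h1
          have e2 : dist (φ (iterSeq f n x)) (iterSeq f (n+1) x) < ε/4 := h2
          have e3 : dist (φ (iterSeq f n y)) (φ (iterSeq f n x)) < ε/4 := by
            rw [dist_comm]; exact h3
          linarith
      _ = 3*ε/4 := by ring
  have hty := tendsto_pLim p (fun n => iterSeq f n y)
  have htx := tendsto_pLim p (fun n => iterSeq f n x)
  have hdist : Tendsto (fun n => dist (iterSeq f n y) (iterSeq f n x)) (p : Filter ℕ)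
      (𝓝 (dist (pIter f p y) (pIter f p x))) := hty.dist htx
  have hev : ∀ᶠ n in (p : Filter ℕ), dist (iterSeq f n y) (iterSeq f n x) ≤ 3*ε/4 := by
    have : {n : ℕ | N + 1 ≤ n} ∈ (p : Filter ℕ) := by
      apply hp
      simp only [Filter.mem_cofinite]
      apply Set.Finite.subset (Set.finite_Iio (N+1))
      intro n hn
      simp only [Set.mem_compl_iff, Set.mem_setOf_eq, not_le] at hn
      exact hn
    filter_upwards [this] with n hn
    obtain ⟨m, rfl⟩ : ∃ m, n = m + 1 := ⟨n - 1, by omega⟩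
    exact (key m (by omega)).le
  have := le_of_tendsto hdist hev
  linarith
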